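/- arXiv:2503.20809 — 2 statements merged into one kernel-verified Lean document; each statement's English description precedes it below -/
import Mathlib

section
/- Let n ≥ 1 and p ∈ [1,∞). If f ∈ L^p(ℝⁿ) satisfies N_{τ,p}(f) < ∞ for some τ ∈ (0,∞), then lim_{s→0⁺} s ∫₀¹ t^{-(1+ps/2)} ∫_{ℝⁿ} ∫_{ℝⁿ} p_t(x,y) |f(y) − f(x)|^p dy dx dt = 0. -/
open MeasureTheory Real Filter Topology Set
open scoped ENNReal

/-- The classical heat kernel on `ℝⁿ`. -/
noncomputable def heatKernel (n : ℕ) (t : ℝ) (x y : EuclideanSpace ℝ (Fin n)) : ℝ :=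
  (4 * π * t) ^ (-(n : ℝ) / 2) * Real.exp (-‖x - y‖ ^ 2 / (4 * t))

/-- `N_{s,p}(f)^p = ∫₀^∞ t^{-(1+ps/2)} ∫∫ p_t(x,y)|f(y)-f(x)|^p dy dx dt`. -/
noncomputable def besovIntegral (n : ℕ) (p s : ℝ) (f : EuclideanSpace ℝ (Fin n) → ℝ) : ℝ≥0∞ :=
  ∫⁻ t in Set.Ioi (0:ℝ), ENNReal.ofReal (t ^ (-(1 + p * s / 2))) *
    ∫⁻ x, ∫⁻ y, ENNReal.ofReal (heatKernel n t x y * |f y - f x| ^ p)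

/- On `(0, 1]` the weight `t ^ (-(1 + p s / 2))` increases with `s`, so for `0 < s ≤ τ` the
short-time integral is bounded by the part over `(0, 1]` of the finite integral `N_{τ,p}(f)^p`;
the factor `s` then forces the limit to be `0`. -/

lemma rpow_weight_le_of_le {p s τ t : ℝ} (hp : 0 ≤ p) (hsτ : s ≤ τ) (ht : t ∈ Ioc (0 : ℝ) 1) :
    t ^ (-(1 + p * s / 2)) ≤ t ^ (-(1 + p * τ / 2)) := by
  refine rpow_le_rpow_of_exponent_ge ht.1 ht.2 ?_
  nlinarith

lemma setLIntegral_Ioc_weight_le_of_le {p s τ : ℝ} (hp : 0 ≤ p) (hsτ : s ≤ τ) (G : ℝ → ℝ≥0∞) :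
    ∫⁻ t in Ioc (0 : ℝ) 1, ENNReal.ofReal (t ^ (-(1 + p * s / 2))) * G t ≤
      ∫⁻ t in Ioc (0 : ℝ) 1, ENNReal.ofReal (t ^ (-(1 + p * τ / 2))) * G t :=
  setLIntegral_mono' measurableSet_Ioc fun _ ht => by
    gcongr ENNReal.ofReal ?_ * _
    exact rpow_weight_le_of_le hp hsτ ht

lemma tendsto_ofReal_mul_nhdsGT_zero {C : ℝ≥0∞} (hC : C ≠ ⊤) :
    Tendsto (fun s : ℝ => ENNReal.ofReal s * C) (𝓝[>] 0) (𝓝 0) := by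
  have hs : Tendsto ENNReal.ofReal (𝓝[>] (0 : ℝ)) (𝓝 0) := by
    simpa using (ENNReal.tendsto_ofReal (tendsto_id (x := 𝓝 (0 : ℝ)))).mono_left
      nhdsWithin_le_nhds
  simpa using ENNReal.Tendsto.mul_const hs (Or.inr hC)

theorem statement2_general (n : ℕ) (p : ℝ) (hp : 1 ≤ p)
    (f : EuclideanSpace ℝ (Fin n) → ℝ)
    (τ : ℝ) (hτ : 0 < τ) (hfin : besovIntegral n p τ f < ⊤) :
    Tendsto (fun s : ℝ => ENNReal.ofReal s *
        ∫⁻ t in Set.Ioc (0:ℝ) 1, ENNReal.ofReal (t ^ (-(1 + p * s / 2))) *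
          ∫⁻ x, ∫⁻ y, ENNReal.ofReal (heatKernel n t x y * |f y - f x| ^ p))
      (𝓝[>] (0:ℝ)) (𝓝 0) := by
  set G : ℝ → ℝ≥0∞ := fun t =>
    ∫⁻ x, ∫⁻ y, ENNReal.ofReal (heatKernel n t x y * |f y - f x| ^ p)
  set C := ∫⁻ t in Ioc (0 : ℝ) 1, ENNReal.ofReal (t ^ (-(1 + p * τ / 2))) * G t
  have hC : C ≠ ⊤ :=
    ((lintegral_mono_set Ioc_subset_Ioi_self).trans_lt hfin).ne
  refine tendsto_of_tendsto_of_tendsto_of_le_of_le' tendsto_const_nhds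
    (tendsto_ofReal_mul_nhdsGT_zero hC) (Eventually.of_forall fun _ => zero_le) ?_
  filter_upwards [Ioc_mem_nhdsGT hτ] with s hs
  gcongr
  exact setLIntegral_Ioc_weight_le_of_le (by linarith) hs.2 G

/-- short-time part: if `f ∈ L^p(ℝⁿ)` and `N_{τ,p}(f) < ∞` for some `τ > 0`,
then `lim_{s→0⁺} s ∫₀¹ t^{-(1+ps/2)} ∫∫ p_t(x,y)|f(y)-f(x)|^p dy dx dt = 0`. -/
theorem statement2 (n : ℕ) (hn : 1 ≤ n) (p : ℝ) (hp : 1 ≤ p)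
    (f : EuclideanSpace ℝ (Fin n) → ℝ) (hf : MemLp f (ENNReal.ofReal p))
    (τ : ℝ) (hτ : 0 < τ) (hfin : besovIntegral n p τ f < ⊤) :
    Tendsto (fun s : ℝ => ENNReal.ofReal s *
        ∫⁻ t in Set.Ioc (0:ℝ) 1, ENNReal.ofReal (t ^ (-(1 + p * s / 2))) *
          ∫⁻ x, ∫⁻ y, ENNReal.ofReal (heatKernel n t x y * |f y - f x| ^ p))
      (𝓝[>] (0:ℝ)) (𝓝 0) :=
  statement2_general n p hp f τ hτ hfin
end

section
/- Let n ≥ 1. For every f ∈ L¹(ℝⁿ), liminf_{s→0⁺} s ∫₁^∞ t^{-(1+s/2)} ∫_{ℝⁿ} ∫_{ℝⁿ} p_t(x,y) |f(y) − f(x)| dy dx dt ≥ 4 ‖f‖_{L¹}. -/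
/-!
Since `p_t` is a symmetric probability kernel, integrating the pointwise inequality
`|f(x)| + |f(y)| ≤ |f(y) - f(x)| + 2 min(|f(x)|, |f(y)|)` against `p_t(x,y) dy dx` gives
`2‖f‖₁ ≤ ∫∫ p_t(x,y) |f(y) - f(x)| + 2 ∫ min(|f(x)|, ‖p_t‖_∞ ‖f‖₁)`. As `t → ∞`,
`‖p_t‖_∞ = (4πt)^{-n/2} → 0`, so the last term vanishes by dominated convergence and the double
integral has `liminf_{t→∞} ≥ 2‖f‖₁`. Finally `s ∫_T^∞ t^{-(1+s/2)} dt = 2 T^{-s/2} → 2` as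
`s → 0⁺`, so the Abel-type mean in the statement is at least twice that `liminf`.
-/

open MeasureTheory Real Filter Topology Set
open scoped ENNReal

lemma ENNReal.ofReal_abs_add_ofReal_abs_le (a b : ℝ) :
    ENNReal.ofReal |a| + ENNReal.ofReal |b| ≤
      ENNReal.ofReal |b - a| + 2 * min (ENNReal.ofReal |a|) (ENNReal.ofReal |b|) := by
  rw [← ENNReal.ofReal_min, ← ENNReal.ofReal_ofNat 2, ← ENNReal.ofReal_mul zero_le_two,
    ← ENNReal.ofReal_add (abs_nonneg _) (abs_nonneg _),
    ← ENNReal.ofReal_add (abs_nonneg _) (by positivity)]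
  refine ENNReal.ofReal_le_ofReal ?_
  rcases le_total |a| |b| with h | h
  · rw [min_eq_left h]
    linarith [abs_sub_abs_le_abs_sub b a]
  · rw [min_eq_right h]
    linarith [abs_sub_abs_le_abs_sub a b, abs_sub_comm a b]

section SymmetricMarkovKernel

variable {α : Type*} [MeasurableSpace α] {μ : Measure α} {K : α → α → ℝ≥0∞}

lemma lintegral_mul_const_eq_of_lintegral_eq_one (hK : Measurable (Function.uncurry K))
    (hmass : ∀ x, ∫⁻ y, K x y ∂μ = 1) (x : α) (c : ℝ≥0∞) :
    ∫⁻ y, K x y * c ∂μ = c := by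
  rw [lintegral_mul_const _ hK.of_uncurry_left, hmass, one_mul]

lemma lintegral_lintegral_mul_left_eq_of_lintegral_eq_one
    (hK : Measurable (Function.uncurry K)) (hmass : ∀ x, ∫⁻ y, K x y ∂μ = 1) (G : α → ℝ≥0∞) :
    ∫⁻ x, ∫⁻ y, K x y * G x ∂μ ∂μ = ∫⁻ x, G x ∂μ := by
  simp_rw [lintegral_mul_const_eq_of_lintegral_eq_one hK hmass]

lemma lintegral_lintegral_mul_right_eq_of_lintegral_eq_one [SFinite μ]
    (hK : Measurable (Function.uncurry K)) (hsymm : ∀ x y, K x y = K y x)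
    (hmass : ∀ x, ∫⁻ y, K x y ∂μ = 1) {G : α → ℝ≥0∞} (hG : AEMeasurable G μ) :
    ∫⁻ x, ∫⁻ y, K x y * G y ∂μ ∂μ = ∫⁻ x, G x ∂μ := by
  rw [lintegral_lintegral_swap (hK.aemeasurable.mul hG.comp_snd)]
  simp_rw [hsymm _]
  exact lintegral_lintegral_mul_left_eq_of_lintegral_eq_one hK hmass G

lemma lintegral_mul_min_le_min (hK : Measurable (Function.uncurry K))
    (hmass : ∀ x, ∫⁻ y, K x y ∂μ = 1) {C : ℝ≥0∞} (hC : ∀ x y, K x y ≤ C) {G : α → ℝ≥0∞}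
    (hG : AEMeasurable G μ) (x : α) :
    ∫⁻ y, K x y * min (G x) (G y) ∂μ ≤ min (G x) (C * ∫⁻ y, G y ∂μ) := by
  refine le_min ?_ ?_
  · calc ∫⁻ y, K x y * min (G x) (G y) ∂μ ≤ ∫⁻ y, K x y * G x ∂μ := by
          gcongr
          exact min_le_left _ _
      _ = G x := lintegral_mul_const_eq_of_lintegral_eq_one hK hmass x _
  · calc ∫⁻ y, K x y * min (G x) (G y) ∂μ ≤ ∫⁻ y, C * G y ∂μ := by
          gcongr with y
          exacts [hC x y, min_le_right _ _]
      _ = C * ∫⁻ y, G y ∂μ := lintegral_const_mul'' C hG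

lemma two_mul_lintegral_abs_le_of_symmetric [SFinite μ] (hK : Measurable (Function.uncurry K))
    (hsymm : ∀ x y, K x y = K y x) (hmass : ∀ x, ∫⁻ y, K x y ∂μ = 1) {C : ℝ≥0∞}
    (hC : ∀ x y, K x y ≤ C) {g : α → ℝ} (hg : AEMeasurable g μ) :
    2 * ∫⁻ x, ENNReal.ofReal |g x| ∂μ ≤
      ∫⁻ x, ∫⁻ y, K x y * ENNReal.ofReal |g y - g x| ∂μ ∂μ +
        2 * ∫⁻ x, min (ENNReal.ofReal |g x|) (C * ∫⁻ y, ENNReal.ofReal |g y| ∂μ) ∂μ := by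
  set G : α → ℝ≥0∞ := fun x => ENNReal.ofReal |g x|
  have hG : AEMeasurable G μ := hg.abs.ennreal_ofReal
  have hKmin : AEMeasurable (fun z : α × α => K z.1 z.2 * min (G z.1) (G z.2)) (μ.prod μ) :=
    hK.aemeasurable.mul (hG.comp_fst.min hG.comp_snd)
  calc 2 * ∫⁻ x, G x ∂μ
      = ∫⁻ x, ∫⁻ y, K x y * G x ∂μ ∂μ + ∫⁻ x, ∫⁻ y, K x y * G y ∂μ ∂μ := by
        rw [lintegral_lintegral_mul_left_eq_of_lintegral_eq_one hK hmass,
          lintegral_lintegral_mul_right_eq_of_lintegral_eq_one hK hsymm hmass hG, two_mul]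
    _ ≤ ∫⁻ x, ∫⁻ y, K x y * (G x + G y) ∂μ ∂μ := by
        refine (le_lintegral_add _ _).trans (lintegral_mono fun x => ?_)
        simp_rw [mul_add]
        exact le_lintegral_add _ _
    _ ≤ ∫⁻ x, ∫⁻ y, (K x y * ENNReal.ofReal |g y - g x| +
          2 * (K x y * min (G x) (G y))) ∂μ ∂μ := by
        gcongr with x y
        rw [mul_left_comm, ← mul_add]
        exact mul_le_mul_right (ENNReal.ofReal_abs_add_ofReal_abs_le (g x) (g y)) _
    _ = ∫⁻ x, ∫⁻ y, K x y * ENNReal.ofReal |g y - g x| ∂μ ∂μ +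
          2 * ∫⁻ x, ∫⁻ y, K x y * min (G x) (G y) ∂μ ∂μ := by
        have hinner (x : α) : AEMeasurable (fun y => K x y * min (G x) (G y)) μ :=
          hK.of_uncurry_left.aemeasurable.mul (aemeasurable_const.min hG)
        simp_rw [lintegral_add_right' _ ((hinner _).const_mul 2),
          lintegral_const_mul'' 2 (hinner _)]
        rw [lintegral_add_right' _ (hKmin.lintegral_prod_right'.const_mul 2),
          lintegral_const_mul'' 2 hKmin.lintegral_prod_right']
    _ ≤ _ := by
        gcongr with x
        exact lintegral_mul_min_le_min hK hmass hC hG x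

end SymmetricMarkovKernel

lemma tendsto_lintegral_min_nhds_zero {α ι : Type*} [MeasurableSpace α] {μ : Measure α}
    {G : α → ℝ≥0∞} (hG : AEMeasurable G μ) (hGi : ∫⁻ x, G x ∂μ ≠ ∞) {l : Filter ι}
    [l.IsCountablyGenerated] {c : ι → ℝ≥0∞} (hc : Tendsto c l (𝓝 0)) :
    Tendsto (fun i => ∫⁻ x, min (G x) (c i) ∂μ) l (𝓝 0) := by
  have hlim := tendsto_lintegral_filter_of_dominated_convergence' G
    (.of_forall fun _ => hG.min aemeasurable_const) (.of_forall fun _ => .of_forall fun _ =>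
      min_le_left _ _) hGi (.of_forall fun x => (tendsto_const_nhds (x := G x)).min hc)
  simpa using hlim

lemma lintegral_Ioi_ofReal_rpow {T s : ℝ} (hT : 0 < T) (hs : 0 < s) :
    ENNReal.ofReal s * ∫⁻ t in Ioi T, ENNReal.ofReal (t ^ (-(1 + s / 2)))
      = ENNReal.ofReal (2 * T ^ (-s / 2)) := by
  have hexp : -(1 + s / 2) < -1 := by linarith
  rw [← ofReal_integral_eq_lintegral_ofReal (integrableOn_Ioi_rpow_of_lt hexp hT)
    ((ae_restrict_iff' measurableSet_Ioi).2 (.of_forall fun t ht =>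
      rpow_nonneg (hT.trans ht).le _)),
    integral_Ioi_rpow_of_lt hexp hT, ← ENNReal.ofReal_mul hs.le]
  congr 1
  rw [show -(1 + s / 2) + 1 = -(s / 2) by ring, neg_div]
  field_simp

lemma two_mul_liminf_atTop_le_liminf_abel (F : ℝ → ℝ≥0∞) :
    2 * liminf F atTop ≤ liminf (fun s : ℝ => ENNReal.ofReal s *
      ∫⁻ t in Ioi 1, ENNReal.ofReal (t ^ (-(1 + s / 2))) * F t) (𝓝[>] 0) := by
  suffices h : ∀ c < liminf F atTop, 2 * c ≤ liminf (fun s : ℝ => ENNReal.ofReal s *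
      ∫⁻ t in Ioi 1, ENNReal.ofReal (t ^ (-(1 + s / 2))) * F t) (𝓝[>] 0) by
    refine ENNReal.mul_le_of_forall_lt fun a ha c hc => ?_
    exact (mul_le_mul_left ha.le c).trans (h c hc)
  intro c hc
  obtain ⟨T, hT⟩ := eventually_atTop.1
    ((eventually_lt_of_lt_liminf hc).and (eventually_ge_atTop 1))
  have hT1 : 1 ≤ T := (hT T le_rfl).2
  have hT0 : 0 < T := zero_lt_one.trans_le hT1
  have hbound : ∀ᶠ s in 𝓝[>] (0 : ℝ), ENNReal.ofReal (2 * T ^ (-s / 2)) * c ≤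
      ENNReal.ofReal s * ∫⁻ t in Ioi 1, ENNReal.ofReal (t ^ (-(1 + s / 2))) * F t := by
    filter_upwards [self_mem_nhdsWithin] with s (hs : 0 < s)
    calc ENNReal.ofReal (2 * T ^ (-s / 2)) * c
        = ENNReal.ofReal s * ∫⁻ t in Ioi T, ENNReal.ofReal (t ^ (-(1 + s / 2))) * c := by
          rw [lintegral_mul_const' _ _ hc.ne_top, ← mul_assoc, lintegral_Ioi_ofReal_rpow hT0 hs]
      _ ≤ ENNReal.ofReal s * ∫⁻ t in Ioi T, ENNReal.ofReal (t ^ (-(1 + s / 2))) * F t := by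
          gcongr 1
          refine setLIntegral_mono' measurableSet_Ioi fun t ht => ?_
          gcongr
          exact (hT t ht.le).1.le
      _ ≤ _ := by gcongr
  have hlim : Tendsto (fun s : ℝ => ENNReal.ofReal (2 * T ^ (-s / 2)) * c) (𝓝[>] 0)
      (𝓝 (2 * c)) := by
    have hcont : Continuous fun s : ℝ => 2 * T ^ (-s / 2) := by
      fun_prop (disch := exact hT0.ne')
    have h2 := tendsto_nhdsWithin_of_tendsto_nhds (s := Ioi 0)
      (ENNReal.tendsto_ofReal (hcont.tendsto 0))
    simpa using ENNReal.Tendsto.mul_const h2 (.inr hc.ne_top)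
  exact hlim.liminf_eq ▸ liminf_le_liminf hbound

namespace heatKernel

variable {n : ℕ} {t : ℝ}

lemma nonneg (ht : 0 < t) (x y : EuclideanSpace ℝ (Fin n)) : 0 ≤ heatKernel n t x y := by
  unfold heatKernel
  positivity

lemma comm (t : ℝ) (x y : EuclideanSpace ℝ (Fin n)) :
    heatKernel n t x y = heatKernel n t y x := by
  rw [heatKernel, heatKernel, norm_sub_rev]

lemma le_rpow (ht : 0 < t) (x y : EuclideanSpace ℝ (Fin n)) :
    heatKernel n t x y ≤ (4 * π * t) ^ (-(n : ℝ) / 2) := by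
  refine mul_le_of_le_one_right (by positivity) (exp_le_one_iff.2 ?_)
  exact div_nonpos_of_nonpos_of_nonneg (by simp) (by positivity)

lemma continuous_uncurry (t : ℝ) :
    Continuous (Function.uncurry (heatKernel n t)) := by
  unfold heatKernel Function.uncurry
  fun_prop

lemma integral_eq_one (ht : 0 < t) (x : EuclideanSpace ℝ (Fin n)) :
    ∫ y, heatKernel n t x y = 1 := by
  have hb : 0 < 1 / (4 * t) := by positivity
  calc ∫ y, heatKernel n t x y
      = (4 * π * t) ^ (-(n : ℝ) / 2) * ∫ z : EuclideanSpace ℝ (Fin n),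
          exp (-(1 / (4 * t)) * ‖z‖ ^ 2) := by
        rw [← integral_sub_left_eq_self _ volume x, ← integral_const_mul]
        simp only [heatKernel, sub_sub_cancel]
        congr 1 with z
        congr 2
        ring
    _ = 1 := by
        rw [GaussianFourier.integral_rexp_neg_mul_sq_norm hb, finrank_euclideanSpace_fin,
          show π / (1 / (4 * t)) = 4 * π * t by field_simp, ← rpow_add (by positivity),
          neg_div, neg_add_cancel, rpow_zero]

lemma integrable (ht : 0 < t) (x : EuclideanSpace ℝ (Fin n)) :
    Integrable (heatKernel n t x) :=
  .of_integral_ne_zero (by simp [integral_eq_one ht x])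

lemma lintegral_eq_one (ht : 0 < t) (x : EuclideanSpace ℝ (Fin n)) :
    ∫⁻ y, ENNReal.ofReal (heatKernel n t x y) = 1 := by
  rw [← ofReal_integral_eq_lintegral_ofReal (integrable ht x)
    (.of_forall (nonneg ht x)), integral_eq_one ht x, ENNReal.ofReal_one]

lemma tendsto_ofReal_rpow (hn : 0 < n) :
    Tendsto (fun t : ℝ => ENNReal.ofReal ((4 * π * t) ^ (-(n : ℝ) / 2))) atTop (𝓝 0) := by
  have hlin : Tendsto (fun t : ℝ => 4 * π * t) atTop atTop :=
    tendsto_id.const_mul_atTop (by positivity)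
  have hrpow := (tendsto_rpow_neg_atTop (y := (n : ℝ) / 2) (by positivity)).comp hlin
  simpa [neg_div, Function.comp_def] using ENNReal.tendsto_ofReal hrpow

lemma two_mul_lintegral_le (ht : 0 < t) {f : EuclideanSpace ℝ (Fin n) → ℝ}
    (hf : AEMeasurable f) :
    2 * ∫⁻ x, ENNReal.ofReal |f x| ≤
      (∫⁻ x, ∫⁻ y, ENNReal.ofReal (heatKernel n t x y * |f y - f x|)) +
        2 * ∫⁻ x, min (ENNReal.ofReal |f x|)
          (ENNReal.ofReal ((4 * π * t) ^ (-(n : ℝ) / 2)) * ∫⁻ y, ENNReal.ofReal |f y|) := by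
  simp_rw [ENNReal.ofReal_mul (nonneg ht _ _)]
  exact two_mul_lintegral_abs_le_of_symmetric (K := fun x y => ENNReal.ofReal (heatKernel n t x y))
    (ENNReal.measurable_ofReal.comp (continuous_uncurry t).measurable)
    (fun x y => by rw [comm]) (lintegral_eq_one ht)
    (fun x y => ENNReal.ofReal_le_ofReal (le_rpow ht x y)) hf

lemma two_mul_lintegral_le_liminf (hn : 0 < n) {f : EuclideanSpace ℝ (Fin n) → ℝ}
    (hf : Integrable f) :
    2 * ∫⁻ x, ENNReal.ofReal |f x| ≤
      liminf (fun t => ∫⁻ x, ∫⁻ y, ENNReal.ofReal (heatKernel n t x y * |f y - f x|)) atTop := by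
  set N := ∫⁻ x, ENNReal.ofReal |f x|
  have hfm : AEMeasurable f := hf.1.aemeasurable
  have hN : N ≠ ∞ := hf.abs.lintegral_lt_top.ne
  have hmin : Tendsto (fun t : ℝ => 2 * ∫⁻ x, min (ENNReal.ofReal |f x|)
      (ENNReal.ofReal ((4 * π * t) ^ (-(n : ℝ) / 2)) * N)) atTop (𝓝 0) := by
    have hc := ENNReal.Tendsto.mul_const (tendsto_ofReal_rpow hn) (.inr hN)
    rw [zero_mul] at hc
    simpa using ENNReal.Tendsto.const_mul
      (tendsto_lintegral_min_nhds_zero hfm.abs.ennreal_ofReal hN hc) (.inr ENNReal.ofNat_ne_top)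
  calc 2 * N ≤ liminf ((fun t => ∫⁻ x, ∫⁻ y, ENNReal.ofReal (heatKernel n t x y * |f y - f x|)) +
        fun t : ℝ => 2 * ∫⁻ x, min (ENNReal.ofReal |f x|)
          (ENNReal.ofReal ((4 * π * t) ^ (-(n : ℝ) / 2)) * N)) atTop := by
        refine le_liminf_of_le (by isBoundedDefault) ?_
        filter_upwards [eventually_gt_atTop 0] with t ht
        rw [Pi.add_apply]
        exact two_mul_lintegral_le ht hfm
    _ = _ := ENNReal.liminf_add_of_right_tendsto_zero hmin _

end heatKernel

/-- for every `f ∈ L¹(ℝⁿ)`,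
`liminf_{s→0⁺} s ∫₁^∞ t^{-(1+s/2)} ∫∫ p_t(x,y)|f(y)-f(x)| dy dx dt ≥ 4‖f‖₁`. -/
theorem statement5 (n : ℕ) (hn : 1 ≤ n)
    (f : EuclideanSpace ℝ (Fin n) → ℝ) (hf : Integrable f) :
    4 * (∫⁻ x, ENNReal.ofReal |f x|) ≤
      Filter.liminf (fun s : ℝ => ENNReal.ofReal s *
          ∫⁻ t in Set.Ioi (1:ℝ), ENNReal.ofReal (t ^ (-(1 + s / 2))) *
            ∫⁻ x, ∫⁻ y, ENNReal.ofReal (heatKernel n t x y * |f y - f x|))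
        (𝓝[>] (0:ℝ)) := by
  calc 4 * ∫⁻ x, ENNReal.ofReal |f x| = 2 * (2 * ∫⁻ x, ENNReal.ofReal |f x|) := by
        rw [← mul_assoc]; norm_num
    _ ≤ 2 * liminf (fun t => ∫⁻ x, ∫⁻ y, ENNReal.ofReal (heatKernel n t x y * |f y - f x|))
          atTop := by
        gcongr
        exact heatKernel.two_mul_lintegral_le_liminf hn hf
    _ ≤ _ := two_mul_liminf_atTop_le_liminf_abel _
end
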